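/- arXiv:2305.07888 — 2 statements merged into one kernel-verified Lean document; each statement's English description precedes it below -/
import Mathlib

section
/- (Theorem 1, variant restricted to causally invariant competitors, as in the paper's proof.) Assume causal factors are identifiable from inputs via a map φ. Let P^s and P^t be domains with supp(P^t_C) ⊆ supp(P^s_C). If Q is causally invariant and ℓ(P^s,Q) ≤ ℓ(P^s,Q') for every causally invariant prediction model Q', then ℓ(P^t,Q) ≤ ℓ(P^t,Q') for every causally invariant prediction model Q'. -/
open scoped ENNReal BigOperators

namespace CLD

/-- Negative logarithm on `ℝ≥0∞`, with the convention `-log 0 = +∞`.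
(For `q ∈ (0,1]` this is the usual `-log q`.) -/
noncomputable def neglog (q : ℝ≥0∞) : ℝ≥0∞ :=
  if q = 0 then ⊤ else ENNReal.ofReal (-Real.log q.toReal)

variable {C N X Y : Type*} [Fintype C] [Fintype N] [Fintype X] [Fintype Y]

/-- Causal marginal `P_C(c) = Σ_n P(c,n)` of a domain `P`. -/
noncomputable def causalMarginal (P : PMF (C × N)) (c : C) : ℝ≥0∞ :=
  ∑ n, P (c, n)

/-- Cross-entropy loss of a prediction model `Q` in domain `P`:
`ℓ(P,Q) = Σ_{c,n,x,y} P(c,n)·G(c,n)(x)·L(c)(y)·(−log Q(x)(y))`,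
valued in `[0,∞]` (note `0 * ⊤ = 0` in `ℝ≥0∞`). -/
noncomputable def loss (G : C → N → PMF X) (L : C → PMF Y)
    (P : PMF (C × N)) (Q : X → PMF Y) : ℝ≥0∞ :=
  ∑ c, ∑ n, ∑ x, ∑ y, P (c, n) * G c n x * L c y * neglog (Q x y)

/-- `Q` is causally invariant if it gives the same output on any two inputs
that can be generated from the same causal factor. -/
def CausallyInvariant (G : C → N → PMF X) (Q : X → PMF Y) : Prop :=
  ∀ c n n' x x', 0 < G c n x → 0 < G c n' x' → Q x = Q x'

/-- Causal factors are identifiable from inputs via `φ`. -/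
def Identifiable (G : C → N → PMF X) (φ : X → C) : Prop :=
  ∀ c n x, 0 < G c n x → φ x = c

/-- Shannon entropy of a pmf on a finite type, with the convention `0·(−log 0)=0`
(in `ℝ≥0∞`, `0 * ⊤ = 0`). -/
noncomputable def entropy (p : PMF Y) : ℝ≥0∞ :=
  ∑ y, p y * neglog (p y)

lemma neglog_ne_top {q : ℝ≥0∞} (h : q ≠ 0) : neglog q ≠ ⊤ := by
  simp [neglog, h]

lemma loss_eq (G : C → N → PMF X) (L : C → PMF Y) (P : PMF (C × N))
    (Q : X → PMF Y) (rep : C → X)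
    (hrep : ∀ c n x, 0 < G c n x → Q x = Q (rep c)) :
    loss G L P Q = ∑ c, causalMarginal P c * ∑ y, L c y * neglog (Q (rep c) y) := by
  unfold loss causalMarginal
  refine Finset.sum_congr rfl fun c _ => ?_
  rw [Finset.sum_mul]
  refine Finset.sum_congr rfl fun n _ => ?_
  have key : ∀ x : X, (∑ y, P (c, n) * G c n x * L c y * neglog (Q x y))
      = G c n x * (P (c, n) * ∑ y, L c y * neglog (Q (rep c) y)) := by
    intro x
    by_cases h : G c n x = 0
    · simp [h]
    · rw [hrep c n x (pos_iff_ne_zero.mpr h), Finset.mul_sum, Finset.mul_sum]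
      refine Finset.sum_congr rfl fun y _ => ?_
      ring
  calc (∑ x, ∑ y, P (c, n) * G c n x * L c y * neglog (Q x y))
      = ∑ x, G c n x * (P (c, n) * ∑ y, L c y * neglog (Q (rep c) y)) :=
        Finset.sum_congr rfl fun x _ => key x
    _ = (∑ x, G c n x) * (P (c, n) * ∑ y, L c y * neglog (Q (rep c) y)) := by
        rw [Finset.sum_mul]
    _ = P (c, n) * ∑ y, L c y * neglog (Q (rep c) y) := by
        have : (∑ x, G c n x) = 1 := by
          rw [← tsum_fintype (L := .unconditional _)]; exact (G c n).tsum_coe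
        rw [this, one_mul]

/-- **Theorem 1, variant restricted to causally invariant competitors.** -/
theorem optimal_dg_invariant_competitors
    {C N X Y : Type*} [Fintype C] [Fintype N] [Fintype X] [Fintype Y]
    [Nonempty C] [Nonempty N] [Nonempty X] [Nonempty Y]
    (G : C → N → PMF X) (L : C → PMF Y) (φ : X → C)
    (hφ : Identifiable G φ)
    (Ps Pt : PMF (C × N))
    (hsupp : ∀ c, 0 < causalMarginal Pt c → 0 < causalMarginal Ps c)
    (Q : X → PMF Y)
    (hinv : CausallyInvariant G Q)
    (hmin : ∀ Q' : X → PMF Y, CausallyInvariant G Q' → loss G L Ps Q ≤ loss G L Ps Q') :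
    ∀ Q' : X → PMF Y, CausallyInvariant G Q' → loss G L Pt Q ≤ loss G L Pt Q' := by
  intro Q' hinv'
  classical
  obtain ⟨n₀⟩ := ‹Nonempty N›
  -- representative input for each causal factor
  have hex : ∀ c : C, ∃ x, G c n₀ x ≠ 0 := fun c => by
    obtain ⟨x, hx⟩ := (G c n₀).support_nonempty
    exact ⟨x, hx⟩
  choose rep hrep using hex
  have hpos : ∀ c, 0 < G c n₀ (rep c) := fun c => pos_iff_ne_zero.mpr (hrep c)
  have hφrep : ∀ c, φ (rep c) = c := fun c => hφ c n₀ (rep c) (hpos c)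
  have mkrep : ∀ (R : X → PMF Y), CausallyInvariant G R →
      ∀ c n x, 0 < G c n x → R x = R (rep c) :=
    fun R hR c n x h => hR c n n₀ x (rep c) h (hpos c)
  set S : C → ℝ≥0∞ := fun c => ∑ y, L c y * neglog (Q (rep c) y) with hS
  set S' : C → ℝ≥0∞ := fun c => ∑ y, L c y * neglog (Q' (rep c) y) with hS'
  have hlQ : ∀ P : PMF (C × N), loss G L P Q = ∑ c, causalMarginal P c * S c :=
    fun P => loss_eq G L P Q rep (mkrep Q hinv)
  have hlQ' : ∀ P : PMF (C × N), loss G L P Q' = ∑ c, causalMarginal P c * S' c :=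
    fun P => loss_eq G L P Q' rep (mkrep Q' hinv')
  -- the minimal loss is finite
  have hfin : loss G L Ps Q ≠ ⊤ := by
    have h0 : loss G L Ps (fun _ => PMF.uniformOfFintype Y) ≠ ⊤ := by
      refine LT.lt.ne ?_
      unfold loss
      rw [ENNReal.sum_lt_top]; intro c _
      rw [ENNReal.sum_lt_top]; intro n _
      rw [ENNReal.sum_lt_top]; intro x _
      rw [ENNReal.sum_lt_top]; intro y _
      refine ENNReal.mul_lt_top (ENNReal.mul_lt_top (ENNReal.mul_lt_top
        (Ps.apply_lt_top _) ((G c n).apply_lt_top _)) ((L c).apply_lt_top _)) ?_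
      exact lt_top_iff_ne_top.mpr (neglog_ne_top (by simp))
    exact fun h => h0 (top_le_iff.mp (h ▸ hmin _ (fun _ _ _ _ _ _ _ => rfl)))
  have hfin' : (∑ c, causalMarginal Ps c * S c) ≠ ⊤ := by rw [← hlQ]; exact hfin
  -- per-causal-factor optimality on the source support
  have hkey : ∀ c₀ : C, causalMarginal Ps c₀ * S c₀ ≤ causalMarginal Ps c₀ * S' c₀ := by
    intro c₀
    set Q'' : X → PMF Y := fun x => if φ x = c₀ then Q' x else Q x with hQ''
    have hinv'' : CausallyInvariant G Q'' := by
      intro c n n' x x' hx hx'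
      have e1 := hφ c n x hx
      have e2 := hφ c n' x' hx'
      by_cases hc : c = c₀
      · simp only [hQ'', e1, e2, hc, if_pos rfl]
        exact hinv' c n n' x x' hx hx'
      · simp only [hQ'', e1, e2, if_neg hc]
        exact hinv c n n' x x' hx hx'
    have hrepQ'' : ∀ c, Q'' (rep c) = if c = c₀ then Q' (rep c) else Q (rep c) := by
      intro c; simp only [hQ'', hφrep c]
    have hmain := hmin Q'' hinv''
    rw [hlQ Ps, loss_eq G L Ps Q'' rep (mkrep Q'' hinv'')] at hmain
    have hS'' : ∀ c, (∑ y, L c y * neglog (Q'' (rep c) y))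
        = if c = c₀ then S' c else S c := by
      intro c
      rw [hrepQ'' c]
      by_cases hc : c = c₀ <;> simp [hc, hS, hS']
    have hmain2 : (∑ c, causalMarginal Ps c * S c)
        ≤ ∑ c, causalMarginal Ps c * (if c = c₀ then S' c else S c) :=
      hmain.trans_eq (Finset.sum_congr rfl fun c _ => by rw [hS'' c])
    have e1 : (∑ c, causalMarginal Ps c * S c)
        = causalMarginal Ps c₀ * S c₀
          + ∑ c ∈ Finset.univ.erase c₀, causalMarginal Ps c * S c :=
      (Finset.add_sum_erase Finset.univ _ (Finset.mem_univ c₀)).symm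
    have e2 : (∑ c, causalMarginal Ps c * (if c = c₀ then S' c else S c))
        = causalMarginal Ps c₀ * S' c₀
          + ∑ c ∈ Finset.univ.erase c₀, causalMarginal Ps c * S c := by
      rw [← Finset.add_sum_erase Finset.univ _ (Finset.mem_univ c₀), if_pos rfl]
      congr 1
      refine Finset.sum_congr rfl fun c hc => ?_
      rw [if_neg (Finset.ne_of_mem_erase hc)]
    rw [e1, e2] at hmain2
    have hne : (∑ c ∈ Finset.univ.erase c₀, causalMarginal Ps c * S c) ≠ ⊤ := by
      intro h
      exact hfin' (top_le_iff.mp (h ▸ Finset.sum_le_sum_of_subset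
        (Finset.subset_univ _)))
    exact (ENNReal.add_le_add_iff_right hne).mp hmain2
  have hceS : ∀ c, 0 < causalMarginal Ps c → S c ≤ S' c := by
    intro c hc
    have hcne : causalMarginal Ps c ≠ ⊤ := by
      refine LT.lt.ne ?_
      rw [causalMarginal, ENNReal.sum_lt_top]
      exact fun n _ => Ps.apply_lt_top _
    exact (ENNReal.mul_le_mul_iff_right hc.ne' hcne).mp (hkey c)
  rw [hlQ Pt, hlQ' Pt]
  refine Finset.sum_le_sum fun c _ => ?_
  by_cases h : causalMarginal Pt c = 0
  · simp [h]
  · exact mul_le_mul_right (hceS c (hsupp c (pos_iff_ne_zero.mpr h))) _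


end CLD
end

section
/- (Quantitative form of Theorem 1: the target loss of a causally invariant source minimizer attains the minimal target value.) Assume causal factors are identifiable from inputs via a map φ. Let P^s and P^t be domains with supp(P^t_C) ⊆ supp(P^s_C). If Q is causally invariant and ℓ(P^s,Q) ≤ ℓ(P^s,Q') for every prediction model Q', then ℓ(P^t,Q) = Σ_c P^t_C(c)·H(L(c)), which is the minimum of ℓ(P^t,·) over all prediction models. -/
open scoped ENNReal BigOperators

namespace CLD

variable {C N X Y : Type*} [Fintype C] [Fintype N] [Fintype X] [Fintype Y]

/-! ### Auxiliary material -/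

/-- Cross-entropy of two pmfs. -/
noncomputable def CE (p q : PMF Y) : ℝ≥0∞ := ∑ y, p y * neglog (q y)

lemma entropy_eq_CE (p : PMF Y) : entropy p = CE p p := rfl

lemma pmf_sum_eq_one {ι : Type*} [Fintype ι] (p : PMF ι) : ∑ i, p i = 1 := by
  rw [← tsum_fintype (L := .unconditional _)]; exact p.tsum_coe

lemma pmf_toReal_le_one {ι : Type*} (p : PMF ι) (i : ι) : (p i).toReal ≤ 1 := by
  have := ENNReal.toReal_mono (by simp) (p.coe_le_one i)
  simpa using this

/-- Gibbs' inequality: entropy is at most cross-entropy. -/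
lemma entropy_le_CE (p q : PMF Y) : entropy p ≤ CE p q := by
  by_cases hq : ∀ y, p y ≠ 0 → q y ≠ 0
  · -- convert to a real statement
    have hterm : ∀ (r : PMF Y), (∀ y, p y ≠ 0 → r y ≠ 0) →
        CE p r = ENNReal.ofReal (∑ y, (p y).toReal * (-Real.log (r y).toReal)) := by
      intro r hr
      have : ∀ y, p y * neglog (r y)
          = ENNReal.ofReal ((p y).toReal * (-Real.log (r y).toReal)) := by
        intro y
        by_cases hp : p y = 0
        · simp [hp]
        · rw [neglog, if_neg (hr y hp)]
          conv_lhs => rw [← ENNReal.ofReal_toReal (p.apply_ne_top y)]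
          rw [← ENNReal.ofReal_mul ENNReal.toReal_nonneg]
      rw [CE, ENNReal.ofReal_sum_of_nonneg]
      · exact Finset.sum_congr rfl fun y _ => this y
      · intro y _
        apply mul_nonneg ENNReal.toReal_nonneg
        rw [neg_nonneg]
        exact Real.log_nonpos ENNReal.toReal_nonneg (pmf_toReal_le_one r y)
    rw [entropy_eq_CE, hterm p (fun _ h => h), hterm q hq]
    apply ENNReal.ofReal_le_ofReal
    -- the real Gibbs inequality
    set pr := fun y => (p y).toReal with hpr
    set qr := fun y => (q y).toReal with hqr
    have hsum_p : ∑ y, pr y = 1 := by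
      rw [hpr, ← ENNReal.toReal_sum (fun y _ => p.apply_ne_top y), pmf_sum_eq_one]
      simp
    have hsum_q : ∑ y, qr y = 1 := by
      rw [hqr, ← ENNReal.toReal_sum (fun y _ => q.apply_ne_top y), pmf_sum_eq_one]
      simp
    have key : ∑ y, pr y * (Real.log (qr y) - Real.log (pr y)) ≤ 0 := by
      have hterm2 : ∀ y ∈ Finset.univ,
          pr y * (Real.log (qr y) - Real.log (pr y)) ≤ qr y - pr y := by
        intro y _
        by_cases hp : pr y = 0
        · simp [hp]
          exact ENNReal.toReal_nonneg
        · have hppos : 0 < pr y := lt_of_le_of_ne ENNReal.toReal_nonneg (Ne.symm hp)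
          have hpne : p y ≠ 0 := by
            intro h; apply hp; simp [hpr, h]
          have hqpos : 0 < qr y :=
            ENNReal.toReal_pos (hq y hpne) (q.apply_ne_top y)
          have hlog : Real.log (qr y) - Real.log (pr y) = Real.log (qr y / pr y) := by
            rw [Real.log_div (ne_of_gt hqpos) hp]
          rw [hlog]
          have h1 : Real.log (qr y / pr y) ≤ qr y / pr y - 1 :=
            Real.log_le_sub_one_of_pos (div_pos hqpos hppos)
          calc pr y * Real.log (qr y / pr y) ≤ pr y * (qr y / pr y - 1) := by
                exact mul_le_mul_of_nonneg_left h1 ENNReal.toReal_nonneg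
            _ = qr y - pr y := by field_simp
      calc ∑ y, pr y * (Real.log (qr y) - Real.log (pr y))
          ≤ ∑ y, (qr y - pr y) := Finset.sum_le_sum hterm2
        _ = 0 := by rw [Finset.sum_sub_distrib, hsum_p, hsum_q]; ring
    have expand : ∑ y, pr y * (Real.log (qr y) - Real.log (pr y))
        = (∑ y, pr y * (-Real.log (pr y))) - ∑ y, pr y * (-Real.log (qr y)) := by
      rw [← Finset.sum_sub_distrib]
      exact Finset.sum_congr rfl fun y _ => by ring
    rw [expand] at key
    linarith
  · -- some y has p y ≠ 0, q y = 0 : cross-entropy is ⊤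
    push_neg at hq
    obtain ⟨y, hpy, hqy⟩ := hq
    have : CE p q = ⊤ := by
      have hy : p y * neglog (q y) = ⊤ := by
        rw [neglog, if_pos hqy, ENNReal.mul_top hpy]
      refine top_le_iff.mp ?_
      rw [CE]
      calc (⊤ : ℝ≥0∞) = p y * neglog (q y) := hy.symm
        _ ≤ ∑ y, p y * neglog (q y) :=
          Finset.single_le_sum (f := fun y => p y * neglog (q y))
            (fun _ _ => zero_le) (Finset.mem_univ y)
    rw [this]; exact le_top

lemma entropy_ne_top (p : PMF Y) : entropy p ≠ ⊤ := by
  rw [entropy]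
  refine (ENNReal.sum_lt_top.mpr ?_).ne
  intro y _
  by_cases hp : p y = 0
  · simp [hp]
  · rw [neglog, if_neg hp]
    exact ENNReal.mul_lt_top (p.apply_ne_top y).lt_top ENNReal.ofReal_ne_top.lt_top

lemma loss_eq_sum_CE (G : C → N → PMF X) (L : C → PMF Y)
    (P : PMF (C × N)) (Q : X → PMF Y) :
    loss G L P Q = ∑ c, ∑ n, ∑ x, P (c, n) * G c n x * CE (L c) (Q x) := by
  simp only [loss, CE, Finset.mul_sum, mul_assoc]

lemma sum_weighted (G : C → N → PMF X) (P : PMF (C × N)) (h : C → ℝ≥0∞) :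
    ∑ c, ∑ n, ∑ x, P (c, n) * G c n x * h c = ∑ c, causalMarginal P c * h c := by
  refine Finset.sum_congr rfl fun c _ => ?_
  rw [causalMarginal, Finset.sum_mul]
  refine Finset.sum_congr rfl fun n _ => ?_
  calc ∑ x, P (c, n) * G c n x * h c
      = (∑ x, G c n x) * (P (c, n) * h c) := by
        rw [Finset.sum_mul]; exact Finset.sum_congr rfl fun x _ => by ring
    _ = P (c, n) * h c := by rw [pmf_sum_eq_one]; ring

lemma loss_ge (G : C → N → PMF X) (L : C → PMF Y)
    (P : PMF (C × N)) (Q : X → PMF Y) :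
    ∑ c, causalMarginal P c * entropy (L c) ≤ loss G L P Q := by
  rw [loss_eq_sum_CE, ← sum_weighted G P (fun c => entropy (L c))]
  refine Finset.sum_le_sum fun c _ => Finset.sum_le_sum fun n _ =>
    Finset.sum_le_sum fun x _ => ?_
  exact mul_le_mul_right (entropy_le_CE (L c) (Q x)) _

lemma loss_phi (G : C → N → PMF X) (L : C → PMF Y) (φ : X → C)
    (hφ : Identifiable G φ) (P : PMF (C × N)) :
    loss G L P (fun x => L (φ x)) = ∑ c, causalMarginal P c * entropy (L c) := by
  rw [loss_eq_sum_CE, ← sum_weighted G P (fun c => entropy (L c))]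
  refine Finset.sum_congr rfl fun c _ => Finset.sum_congr rfl fun n _ =>
    Finset.sum_congr rfl fun x _ => ?_
  by_cases hg : G c n x = 0
  · simp [hg]
  · have : φ x = c := hφ c n x (pos_iff_ne_zero.mpr hg)
    rw [this, ← entropy_eq_CE]

lemma sum_ne_top_aux {ι : Type*} {s : Finset ι} {f : ι → ℝ≥0∞} (h : ∑ i ∈ s, f i ≠ ⊤)
    {i : ι} (hi : i ∈ s) : f i ≠ ⊤ :=
  (ENNReal.lt_top_of_sum_ne_top h hi).ne

/-- Termwise equality from sum equality in `ℝ≥0∞` (finite case). -/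
lemma eq_of_sum_eq {ι : Type*} [Fintype ι] (f g : ι → ℝ≥0∞)
    (hle : ∀ i, f i ≤ g i) (hsum : ∑ i, g i ≤ ∑ i, f i) (hfin : ∑ i, f i ≠ ⊤) :
    ∀ i, g i = f i := by
  have hgfin : ∑ i, g i ≠ ⊤ := (lt_of_le_of_lt hsum hfin.lt_top).ne
  have hr : ∑ i, (g i).toReal ≤ ∑ i, (f i).toReal := by
    rw [← ENNReal.toReal_sum (fun i _ => sum_ne_top_aux hfin (Finset.mem_univ i)),
      ← ENNReal.toReal_sum (fun i _ => sum_ne_top_aux hgfin (Finset.mem_univ i))]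
    exact ENNReal.toReal_mono hfin hsum
  have hler : ∀ i ∈ Finset.univ, (f i).toReal ≤ (g i).toReal := fun i _ =>
    ENNReal.toReal_mono (sum_ne_top_aux hgfin (Finset.mem_univ i)) (hle i)
  have heq : ∑ i, (f i).toReal = ∑ i, (g i).toReal :=
    le_antisymm (Finset.sum_le_sum hler) hr
  intro i
  have := (Finset.sum_eq_sum_iff_of_le hler).mp heq i (Finset.mem_univ i)
  exact (ENNReal.toReal_eq_toReal_iff'
    (sum_ne_top_aux hgfin (Finset.mem_univ i))
    (sum_ne_top_aux hfin (Finset.mem_univ i))).mp this.symm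

/-- **Quantitative form of Theorem 1.** The target loss of a causally invariant
source minimizer equals `Σ_c Pᵗ_C(c)·H(L(c))`, which is the minimum of the target
loss over all prediction models. -/
theorem optimal_dg_quantitative
    {C N X Y : Type*} [Fintype C] [Fintype N] [Fintype X] [Fintype Y]
    [Nonempty C] [Nonempty N] [Nonempty X] [Nonempty Y]
    (G : C → N → PMF X) (L : C → PMF Y) (φ : X → C)
    (hφ : Identifiable G φ)
    (Ps Pt : PMF (C × N))
    (hsupp : ∀ c, 0 < causalMarginal Pt c → 0 < causalMarginal Ps c)
    (Q : X → PMF Y)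
    (hinv : CausallyInvariant G Q)
    (hmin : ∀ Q' : X → PMF Y, loss G L Ps Q ≤ loss G L Ps Q') :
    loss G L Pt Q = ∑ c, causalMarginal Pt c * entropy (L c) ∧
      ∀ Q' : X → PMF Y,
        (∑ c, causalMarginal Pt c * entropy (L c)) ≤ loss G L Pt Q' := by
  constructor
  case right => exact fun Q' => loss_ge G L Pt Q'
  -- source loss of Q attains the lower bound
  have hsle : loss G L Ps Q ≤ ∑ c, causalMarginal Ps c * entropy (L c) := by
    have := hmin (fun x => L (φ x))
    rwa [loss_phi G L φ hφ Ps] at this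
  -- finiteness of that bound
  have hmarg_fin : ∀ (P : PMF (C × N)) (c : C), causalMarginal P c ≠ ⊤ := fun P c =>
    (ENNReal.sum_lt_top.mpr fun n _ => (P.apply_ne_top _).lt_top).ne
  have hfin : (∑ c, causalMarginal Ps c * entropy (L c)) ≠ ⊤ := by
    refine (ENNReal.sum_lt_top.mpr fun c _ => ?_).ne
    exact ENNReal.mul_lt_top (hmarg_fin Ps c).lt_top (entropy_ne_top (L c)).lt_top
  -- flatten the source loss into a single sum and extract termwise equality
  set F : C × N × X → ℝ≥0∞ :=
    fun t => Ps (t.1, t.2.1) * G t.1 t.2.1 t.2.2 * entropy (L t.1) with hF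
  set Gf : C × N × X → ℝ≥0∞ :=
    fun t => Ps (t.1, t.2.1) * G t.1 t.2.1 t.2.2 * CE (L t.1) (Q t.2.2) with hGf
  have hflatG : ∑ t, Gf t = loss G L Ps Q := by
    rw [loss_eq_sum_CE]
    simp only [hGf, Fintype.sum_prod_type]
  have hflatF : ∑ t, F t = ∑ c, causalMarginal Ps c * entropy (L c) := by
    rw [← sum_weighted G Ps (fun c => entropy (L c))]
    simp only [hF, Fintype.sum_prod_type]
  have key : ∀ t, Gf t = F t := by
    refine eq_of_sum_eq F Gf (fun t => mul_le_mul_right (entropy_le_CE _ _) _) ?_ ?_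
    · rw [hflatG, hflatF]; exact hsle
    · rw [hflatF]; exact hfin
  -- now compute the target loss
  rw [loss_eq_sum_CE, ← sum_weighted G Pt (fun c => entropy (L c))]
  refine Finset.sum_congr rfl fun c _ => Finset.sum_congr rfl fun n _ =>
    Finset.sum_congr rfl fun x _ => ?_
  by_cases hP : Pt (c, n) = 0
  · simp [hP]
  by_cases hG : G c n x = 0
  · simp [hG]
  -- the causal marginal of Pt at c is positive, hence so is that of Ps
  have hMt : 0 < causalMarginal Pt c := by
    refine lt_of_lt_of_le (pos_iff_ne_zero.mpr hP) ?_
    rw [causalMarginal]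
    exact Finset.single_le_sum (f := fun n => Pt (c, n))
      (fun _ _ => zero_le) (Finset.mem_univ n)
  have hMs : causalMarginal Ps c ≠ 0 := (hsupp c hMt).ne'
  obtain ⟨n₀, hn₀⟩ : ∃ n₀, Ps (c, n₀) ≠ 0 := by
    rw [causalMarginal] at hMs
    exact (Finset.exists_ne_zero_of_sum_ne_zero hMs).imp fun i hi => hi.2
  obtain ⟨x₀, hx₀⟩ : ∃ x₀, G c n₀ x₀ ≠ 0 := by
    have : ∑ x, G c n₀ x ≠ 0 := by rw [pmf_sum_eq_one]; exact one_ne_zero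
    exact (Finset.exists_ne_zero_of_sum_ne_zero this).imp fun i hi => hi.2
  -- cancel the positive finite weight to get CE = entropy at x₀
  have hkey := key (c, n₀, x₀)
  simp only [hGf, hF] at hkey
  have ha0 : Ps (c, n₀) * G c n₀ x₀ ≠ 0 := mul_ne_zero hn₀ hx₀
  have hat : Ps (c, n₀) * G c n₀ x₀ ≠ ⊤ :=
    ENNReal.mul_ne_top (Ps.apply_ne_top _) ((G c n₀).apply_ne_top _)
  have hCE : CE (L c) (Q x₀) = entropy (L c) := by
    have h2 := congrArg ((Ps (c, n₀) * G c n₀ x₀)⁻¹ * ·) hkey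
    simpa [← mul_assoc, ENNReal.inv_mul_cancel ha0 hat] using h2
  have hQQ : Q x = Q x₀ :=
    hinv c n n₀ x x₀ (pos_iff_ne_zero.mpr hG) (pos_iff_ne_zero.mpr hx₀)
  rw [hQQ, hCE]

end CLD
end
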